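/- arXiv:1112.0989 — 2 statements merged into one kernel-verified Lean document; each statement's English description precedes it below -/
import Mathlib

section
/- Strong Kodaira decomposition from self-adjointness: suppose d is a closed densely defined operator on a Hilbert space H with d² = 0 (i.e. range(d) ⊆ ker(d)), δ = d* its adjoint, and suppose D = d + δ (with domain Dom(d) ∩ Dom(δ)) is self-adjoint with closed range. Then H decomposes orthogonally as H = (ker d ∩ ker δ) ⊕ closure(range d) ⊕ closure(range δ), and moreover range(d) and range(δ) are closed. -/
/-!
Since `d² = 0`, `range d ⊆ ker d ⟂ range δ`, so for `x` in the domain of `D` the two summands of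
`D x = d x + δ x` are orthogonal; hence `ker D = ker d ∩ ker δ =: N`. As `D` is self-adjoint with
closed range, `H = range D ⊕ ker D`, and `range D ⊆ range d + range δ` gives the decomposition.
Closedness: a point `y` of `closure (range d)` lies in `Nᗮ = range D`, so `y = d x + δ x`; then
`δ x = y - d x` lies in `closure (range d)` and in its orthogonal, so `δ x = 0` and `y = d x`.
-/

local notation "⟪" x ", " y "⟫" => @inner ℂ _ _ x y

/-- The kernel of a partially defined operator, as a submodule of the ambient space. -/
noncomputable def LinearPMap.kerSubmodule {E F : Type*} [NormedAddCommGroup E]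
    [InnerProductSpace ℂ E] [NormedAddCommGroup F] [InnerProductSpace ℂ F]
    (T : E →ₗ.[ℂ] F) : Submodule ℂ E :=
  (LinearMap.ker T.toFun).map T.domain.subtype

open Submodule LinearMap LinearPMap

namespace Submodule

variable {𝕜 E : Type*} [RCLike 𝕜] [NormedAddCommGroup E] [InnerProductSpace 𝕜 E]

theorem isClosed_of_isOrtho_of_topologicalClosure_le_sup {A B : Submodule 𝕜 E} (hAB : A ⟂ B)
    (h : A.topologicalClosure ≤ A ⊔ B) : IsClosed (A : Set E) := by
  refine isClosed_of_closure_subset fun y (hy : y ∈ A.topologicalClosure) => ?_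
  obtain ⟨a, ha, b, hb, rfl⟩ := mem_sup.mp (h hy)
  have hb_closure : b ∈ A.topologicalClosure := by
    simpa using A.topologicalClosure.sub_mem hy (A.le_topologicalClosure ha)
  have hb_perp : b ∈ A.topologicalClosureᗮ := by
    rw [orthogonal_closure]
    exact isOrtho_iff_le.mp hAB.symm hb
  have hb_zero : b = 0 := by
    simpa using (inf_orthogonal_eq_bot _).le ⟨hb_closure, hb_perp⟩
  simpa [hb_zero] using ha

end Submodule

theorem LinearPMap.range_add_le_sup {R E F : Type*} [Ring R] [AddCommGroup E] [Module R E]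
    [AddCommGroup F] [Module R F] (S T : E →ₗ.[R] F) :
    range (S + T).toFun ≤ range S.toFun ⊔ range T.toFun := by
  rintro _ ⟨x, rfl⟩
  exact add_mem_sup ⟨_, rfl⟩ ⟨_, rfl⟩

namespace LinearPMap

variable {E F : Type*} [NormedAddCommGroup E] [InnerProductSpace ℂ E]
  [NormedAddCommGroup F] [InnerProductSpace ℂ F]

theorem mem_kerSubmodule {T : E →ₗ.[ℂ] F} {x : E} :
    x ∈ T.kerSubmodule ↔ ∃ hx : x ∈ T.domain, T ⟨x, hx⟩ = 0 := by
  simp [kerSubmodule]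

theorem kerSubmodule_add_le_inf {S T : E →ₗ.[ℂ] F} (h : range S.toFun ⟂ range T.toFun) :
    (S + T).kerSubmodule ≤ S.kerSubmodule ⊓ T.kerSubmodule := by
  intro x hx
  obtain ⟨⟨hxS, hxT⟩, hx0⟩ := mem_kerSubmodule.mp hx
  have hsum : S ⟨x, hxS⟩ + T ⟨x, hxT⟩ = 0 := hx0
  have hS : S ⟨x, hxS⟩ = 0 := by
    refine disjoint_def.mp h.disjoint _ ⟨_, rfl⟩ ?_
    rw [eq_neg_of_add_eq_zero_left hsum]
    exact neg_mem ⟨_, rfl⟩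
  have hT : T ⟨x, hxT⟩ = 0 := by rwa [hS, zero_add] at hsum
  exact ⟨mem_kerSubmodule.mpr ⟨hxS, hS⟩, mem_kerSubmodule.mpr ⟨hxT, hT⟩⟩

variable [CompleteSpace E] {T : E →ₗ.[ℂ] F} (hT : Dense (T.domain : Set E))
include hT

theorem kerSubmodule_adjoint_isOrtho_range : T†.kerSubmodule ⟂ range T.toFun := by
  rw [isOrtho_iff_inner_eq]
  rintro y hy _ ⟨x, rfl⟩
  obtain ⟨hy, hy0⟩ := mem_kerSubmodule.mp hy
  simpa [hy0] using (adjoint_isFormalAdjoint hT ⟨y, hy⟩ x).symm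

theorem kerSubmodule_isOrtho_range_adjoint : T.kerSubmodule ⟂ range T†.toFun := by
  rw [isOrtho_iff_inner_eq]
  rintro x hx _ ⟨y, rfl⟩
  obtain ⟨hx, hx0⟩ := mem_kerSubmodule.mp hx
  simpa [hx0] using ((adjoint_isFormalAdjoint hT).symm ⟨x, hx⟩ y).symm

theorem orthogonal_range_le_kerSubmodule_adjoint : (range T.toFun)ᗮ ≤ T†.kerSubmodule := by
  intro y hy
  have hy' : ∀ x : T.domain, ⟪(0 : E), x⟫ = ⟪y, T x⟫ := fun x => by
    rw [inner_zero_left, inner_eq_zero_symm.mp (hy (T x) ⟨x, rfl⟩)]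
  have hdom : y ∈ T†.domain := mem_adjoint_domain_of_exists y ⟨0, hy'⟩
  exact mem_kerSubmodule.mpr ⟨hdom, adjoint_apply_eq hT ⟨y, hdom⟩ hy'⟩

end LinearPMap

theorem IsSelfAdjoint.orthogonal_range_le_kerSubmodule {E : Type*} [NormedAddCommGroup E]
    [InnerProductSpace ℂ E] [CompleteSpace E] {A : E →ₗ.[ℂ] E} (hA : IsSelfAdjoint A) :
    (range A.toFun)ᗮ ≤ A.kerSubmodule :=
  (orthogonal_range_le_kerSubmodule_adjoint hA.dense_domain).trans_eq (congrArg kerSubmodule hA)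

theorem strong_kodaira_decomposition_general
    {E : Type*} [NormedAddCommGroup E] [InnerProductSpace ℂ E] [CompleteSpace E]
    (d : E →ₗ.[ℂ] E) (hdense : Dense (d.domain : Set E))
    (hd2 : ∀ x : d.domain, ∃ h : d x ∈ d.domain, d ⟨d x, h⟩ = 0)
    (hD : IsSelfAdjoint (d + d.adjoint))
    (hDrange : IsClosed ((LinearMap.range (d + d.adjoint).toFun : Submodule ℂ E) : Set E)) :
    IsClosed ((LinearMap.range d.toFun : Submodule ℂ E) : Set E) ∧
      IsClosed ((LinearMap.range d.adjoint.toFun : Submodule ℂ E) : Set E) ∧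
      (∀ x ∈ LinearMap.range d.toFun, ∀ y ∈ LinearMap.range d.adjoint.toFun, ⟪x, y⟫ = 0) ∧
      (∀ x ∈ d.kerSubmodule ⊓ d.adjoint.kerSubmodule,
        ∀ y ∈ LinearMap.range d.toFun, ⟪x, y⟫ = 0) ∧
      (∀ x ∈ d.kerSubmodule ⊓ d.adjoint.kerSubmodule,
        ∀ y ∈ LinearMap.range d.adjoint.toFun, ⟪x, y⟫ = 0) ∧
      (d.kerSubmodule ⊓ d.adjoint.kerSubmodule) ⊔
          LinearMap.range d.toFun ⊔ LinearMap.range d.adjoint.toFun = ⊤ := by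
  set N := d.kerSubmodule ⊓ d†.kerSubmodule
  set D := d + d†
  have hdδ : range d.toFun ⟂ range d†.toFun :=
    (kerSubmodule_isOrtho_range_adjoint hdense).mono_left
      fun _ ⟨x, hx⟩ => hx ▸ mem_kerSubmodule.mpr (hd2 x)
  have hNd : N ⟂ range d.toFun :=
    (kerSubmodule_adjoint_isOrtho_range hdense).mono_left inf_le_right
  have hNδ : N ⟂ range d†.toFun :=
    (kerSubmodule_isOrtho_range_adjoint hdense).mono_left inf_le_left
  have hker : (range D.toFun)ᗮ ≤ N :=
    hD.orthogonal_range_le_kerSubmodule.trans (kerSubmodule_add_le_inf hdδ)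
  have hrange : range D.toFun ≤ range d.toFun ⊔ range d†.toFun := range_add_le_sup _ _
  have hNperp : Nᗮ ≤ range D.toFun := by
    simpa [orthogonal_orthogonal_eq_closure, hDrange.submodule_topologicalClosure_eq]
      using orthogonal_le hker
  have hclosure {A : Submodule ℂ E} (hA : A ⟂ N) :
      A.topologicalClosure ≤ range d.toFun ⊔ range d†.toFun :=
    (A.topologicalClosure_minimal (isOrtho_iff_le.mp hA) N.isClosed_orthogonal).trans
      (hNperp.trans hrange)
  have : CompleteSpace (range D.toFun) := hDrange.completeSpace_coe
  refine ⟨isClosed_of_isOrtho_of_topologicalClosure_le_sup hdδ (hclosure hNd.symm),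
    isClosed_of_isOrtho_of_topologicalClosure_le_sup hdδ.symm
      ((hclosure hNδ.symm).trans_eq (sup_comm _ _)),
    isOrtho_iff_inner_eq.mp hdδ, isOrtho_iff_inner_eq.mp hNd, isOrtho_iff_inner_eq.mp hNδ, ?_⟩
  rw [eq_top_iff, ← sup_orthogonal_of_hasOrthogonalProjection (K := range D.toFun), sup_assoc]
  exact sup_le (hrange.trans le_sup_right) (hker.trans le_sup_left)

/-- Strong Kodaira decomposition from self-adjointness: suppose `d` is a closed densely
defined operator on a Hilbert space `H` with `d² = 0` (range(d) ⊆ ker(d)), `δ = d*` its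
adjoint, and suppose `D = d + δ` (with domain `Dom(d) ∩ Dom(δ)`) is self-adjoint with
closed range. Then `H` decomposes orthogonally as
`H = (ker d ∩ ker δ) ⊕ closure(range d) ⊕ closure(range δ)`, and moreover `range(d)` and
`range(δ)` are closed. -/
theorem strong_kodaira_decomposition
    {E : Type*} [NormedAddCommGroup E] [InnerProductSpace ℂ E] [CompleteSpace E]
    (d : E →ₗ.[ℂ] E) (hdense : Dense (d.domain : Set E)) (hclosed : d.IsClosed)
    (hd2 : ∀ x : d.domain, ∃ h : d x ∈ d.domain, d ⟨d x, h⟩ = 0)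
    (hD : IsSelfAdjoint (d + d.adjoint))
    (hDrange : IsClosed ((LinearMap.range (d + d.adjoint).toFun : Submodule ℂ E) : Set E)) :
    IsClosed ((LinearMap.range d.toFun : Submodule ℂ E) : Set E) ∧
      IsClosed ((LinearMap.range d.adjoint.toFun : Submodule ℂ E) : Set E) ∧
      (∀ x ∈ LinearMap.range d.toFun, ∀ y ∈ LinearMap.range d.adjoint.toFun, ⟪x, y⟫ = 0) ∧
      (∀ x ∈ d.kerSubmodule ⊓ d.adjoint.kerSubmodule,
        ∀ y ∈ LinearMap.range d.toFun, ⟪x, y⟫ = 0) ∧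
      (∀ x ∈ d.kerSubmodule ⊓ d.adjoint.kerSubmodule,
        ∀ y ∈ LinearMap.range d.adjoint.toFun, ⟪x, y⟫ = 0) ∧
      (d.kerSubmodule ⊓ d.adjoint.kerSubmodule) ⊔
          LinearMap.range d.toFun ⊔ LinearMap.range d.adjoint.toFun = ⊤ :=
  strong_kodaira_decomposition_general d hdense hd2 hD hDrange
end

section
/- Completeness criterion: a Riemannian manifold (M,g) is complete if it admits a smooth proper function φ : M → ℝ with |∇φ| ≤ 1 everywhere (Gordon's theorem, one direction): properness of φ together with the bound |φ(x) − φ(y)| ≤ d(x,y) forces closed bounded sets to be compact, hence (M, d_g) is complete. -/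
theorem complete_of_proper_lipschitz_function_general {M : Type*} [MetricSpace M]
    (φ : M → ℝ) (hlip : LipschitzWith 1 φ)
    (hproper : ∀ K : Set ℝ, IsCompact K → IsCompact (φ ⁻¹' K)) :
    CompleteSpace M :=
  have : ProperSpace M :=
    hlip.properSpace (isProperMap_iff_isCompact_preimage.2 ⟨hlip.continuous, hproper⟩)
  inferInstance

/-- Completeness criterion (one direction of Gordon's theorem): a connected metric space
(such as a Riemannian manifold with its geodesic distance) admitting a proper function
`φ : M → ℝ` which is `1`-Lipschitz (for a Riemannian manifold: `|∇φ| ≤ 1`, which forces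
`|φ(x) − φ(y)| ≤ d(x,y)`) is complete: properness of `φ` together with the Lipschitz
bound forces closed bounded sets to be compact, hence `(M, d)` is complete. -/
theorem complete_of_proper_lipschitz_function {M : Type*} [MetricSpace M]
    [ConnectedSpace M] (φ : M → ℝ) (hlip : LipschitzWith 1 φ)
    (hproper : ∀ K : Set ℝ, IsCompact K → IsCompact (φ ⁻¹' K)) :
    CompleteSpace M :=
  complete_of_proper_lipschitz_function_general φ hlip hproper
end
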